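/- arXiv:2311.01758 — 4 statements merged into one kernel-verified Lean document; each statement's English description precedes it below -/
import Mathlib

section
/- Let Ω ⊆ ℝⁿ be a nonempty closed set and g: ℝⁿ → ℝ ∪ {+∞} a lower semicontinuous function such that Ω ∩ dom g is nonempty and unbounded, and suppose S := {x ∈ Ω : g(x) ≤ 0} is nonempty. If ∂^∞g(∞) ∩ (−N(∞;Ω)) = {0} and 0 ∉ ∂g(∞) + N(∞;Ω), then S has an error bound at infinity, i.e., there exist α > 0 and R > 0 such that d(x;S) ≤ α·max(g(x),0) for all x ∈ Ω with ‖x‖ > R. -/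
open Filter Topology Set Pointwise RealInnerProductSpace

noncomputable section

variable {E : Type*} [NormedAddCommGroup E] [InnerProductSpace ℝ E]

/-- The Fréchet (regular) normal cone to `Ω` at `x`:
`{v | limsup_{y→x, y∈Ω} ⟪v, y-x⟫/‖y-x‖ ≤ 0}`, empty if `x ∉ Ω`. -/
def FrechetNormalCone (Ω : Set E) (x : E) : Set E :=
  {v | x ∈ Ω ∧ ∀ ε > (0:ℝ), ∀ᶠ y in 𝓝[Ω] x, ⟪v, y - x⟫ ≤ ε * ‖y - x‖}

/-- The limiting (Mordukhovich) normal cone to `Ω` at `x`. -/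
def LimitingNormalCone (Ω : Set E) (x : E) : Set E :=
  {v | ∃ xs vs : ℕ → E, (∀ k, vs k ∈ FrechetNormalCone Ω (xs k)) ∧
    Tendsto xs atTop (𝓝 x) ∧ Tendsto vs atTop (𝓝 v)}

/-- The normal cone to an unbounded set `Ω` at infinity. -/
def NormalConeAtInfty (Ω : Set E) : Set E :=
  {v | ∃ xs vs : ℕ → E, (∀ k, vs k ∈ FrechetNormalCone Ω (xs k)) ∧
    Tendsto (fun k => ‖xs k‖) atTop atTop ∧ Tendsto vs atTop (𝓝 v)}

/-- The epigraph of `f : E → ℝ ∪ {+∞}` as a subset of the (ℓ²-)product `E × ℝ`. -/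
def epiSet (f : E → EReal) : Set (WithLp 2 (E × ℝ)) :=
  {p | f (WithLp.equiv 2 (E × ℝ) p).1 ≤ ((WithLp.equiv 2 (E × ℝ) p).2 : EReal)}

/-- The point `(x, t)` of the (ℓ²-)product `E × ℝ`. -/
def mkP (x : E) (t : ℝ) : WithLp 2 (E × ℝ) := (WithLp.equiv 2 (E × ℝ)).symm (x, t)

/-- `𝒩(f)`: limits of limiting normals to `epi f` at points `(x_k, f(x_k))` with `‖x_k‖ → ∞`. -/
def NclAtInfty (f : E → EReal) : Set (E × ℝ) :=
  {q | ∃ (xs : ℕ → E) (ws : ℕ → WithLp 2 (E × ℝ)),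
    (∀ k, f (xs k) ≠ ⊤) ∧
    Tendsto (fun k => ‖xs k‖) atTop atTop ∧
    (∀ k, ws k ∈ LimitingNormalCone (epiSet f) (mkP (xs k) (f (xs k)).toReal)) ∧
    Tendsto (fun k => WithLp.equiv 2 (E × ℝ) (ws k)) atTop (𝓝 q)}

/-- The limiting subdifferential of `f` at infinity: `∂f(∞) = {u | (u,-1) ∈ 𝒩(f)}`. -/
def subInfty (f : E → EReal) : Set E := {u | (u, (-1 : ℝ)) ∈ NclAtInfty f}

/-- The singular subdifferential of `f` at infinity: `∂^∞f(∞) = {u | (u,0) ∈ 𝒩(f)}`. -/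
def singSubInfty (f : E → EReal) : Set E := {u | (u, (0 : ℝ)) ∈ NclAtInfty f}

/-- The singular subdifferential of `f` at a point `x ∈ dom f`:
`∂^∞f(x) = {v | (v,0) ∈ N((x,f(x)); epi f)}`, empty if `x ∉ dom f`. -/
def singSub (f : E → EReal) (x : E) : Set E :=
  {v | f x ≠ ⊤ ∧ mkP v 0 ∈ LimitingNormalCone (epiSet f) (mkP x (f x).toReal)}

/-- `λ∘∂f(∞)`: equals `λ • ∂f(∞)` for `λ ≠ 0` and `∂^∞f(∞)` for `λ = 0`. -/
def lamCirc (f : E → EReal) (lam : ℝ) : Set E :=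
  if lam = 0 then singSubInfty f else lam • subInfty f

/-- `f` is Lipschitz at infinity. -/
def LipschitzAtInfty (f : E → ℝ) : Prop :=
  ∃ L > (0:ℝ), ∃ R > (0:ℝ), ∀ x x' : E, R < ‖x‖ → R < ‖x'‖ → |f x - f x'| ≤ L * ‖x - x'‖

end

/-!
Suppose there is no error bound. Then for every `k` there is `x_k ∈ Ω` with `‖x_k‖ > k + 1` and
`(k + 1) g(x_k) < d_k := d(x_k; S)`. Minimizing `max(g, 0) + c_k ‖· - x_k‖²` over
`Ω ∩ B̄(x_k, d_k / 2)`, with `c_k = 4 / ((k + 1) d_k)`, gives a minimizer `u_k` with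
`‖u_k - x_k‖ < d_k / 2`, hence `u_k ∉ S` and `g(u_k) > 0`. Doubling the variable and penalizing
the gap by `m ‖y - z‖²` (a fuzzy sum rule) produces Fréchet subgradients `ξ_k` of `g` and Fréchet
normals `η_k` to `Ω` at points near `u_k` with `‖ξ_k + η_k‖ ≤ 5 / (k + 1)`; these points escape to
infinity since `d_k ≤ ‖x_k‖ + ‖s‖` for any `s ∈ S`. If `(ξ_k)` has a bounded subsequence, its
limits give `0 ∈ ∂g(∞) + N(∞; Ω)`; otherwise `ξ_k / ‖ξ_k‖` accumulates at a unit vector of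
`∂^∞g(∞) ∩ -N(∞; Ω)`.

The penalty argument needs a function bounded below, hence `max(g, 0)`; where `g > 0` its
epigraph coincides with that of `g` near the relevant points.
-/

open Metric

section NormalCones

variable {E : Type*} [NormedAddCommGroup E] [InnerProductSpace ℝ E]

theorem FrechetNormalCone.smul_mem {Ω : Set E} {x v : E} {c : ℝ} (hc : 0 < c)
    (hv : v ∈ FrechetNormalCone Ω x) : c • v ∈ FrechetNormalCone Ω x := by
  refine ⟨hv.1, fun ε hε => ?_⟩
  filter_upwards [hv.2 (ε / c) (by positivity)] with y hy
  calc ⟪c • v, y - x⟫ = c * ⟪v, y - x⟫ := real_inner_smul_left _ _ _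
    _ ≤ c * (ε / c * ‖y - x‖) := by gcongr
    _ = ε * ‖y - x‖ := by field_simp

theorem FrechetNormalCone.subset_limitingNormalCone (Ω : Set E) (x : E) :
    FrechetNormalCone Ω x ⊆ LimitingNormalCone Ω x :=
  fun v hv => ⟨fun _ => x, fun _ => v, fun _ => hv, tendsto_const_nhds, tendsto_const_nhds⟩

theorem frechetNormalCone_congr {Ω Ω' U : Set E} {x : E} (hU : U ∈ 𝓝 x) (h : Ω ∩ U = Ω' ∩ U) :
    FrechetNormalCone Ω x = FrechetNormalCone Ω' x := by
  have hx : x ∈ Ω ↔ x ∈ Ω' := by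
    simpa [mem_of_mem_nhds hU] using Set.ext_iff.mp h x
  simp only [FrechetNormalCone, hx, nhdsWithin_eq_nhdsWithin' hU h]

theorem mem_frechetNormalCone_of_eventually_inner_le {Ω : Set E} {x v : E} (hx : x ∈ Ω) (C : ℝ)
    (h : ∀ᶠ y in 𝓝[Ω] x, ⟪v, y - x⟫ ≤ C * ‖y - x‖ ^ 2) : v ∈ FrechetNormalCone Ω x := by
  refine ⟨hx, fun ε hε => ?_⟩
  have hsmall : ∀ᶠ y in 𝓝[Ω] x, |C| * ‖y - x‖ ≤ ε := by
    have : Tendsto (fun y => |C| * ‖y - x‖) (𝓝 x) (𝓝 0) := by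
      simpa using (tendsto_norm_sub_self x).const_mul |C|
    exact nhdsWithin_le_nhds (this.eventually (ge_mem_nhds hε))
  filter_upwards [h, hsmall] with y hy hsmall
  calc ⟪v, y - x⟫ ≤ C * ‖y - x‖ ^ 2 := hy
    _ ≤ |C| * ‖y - x‖ * ‖y - x‖ := by rw [sq, ← mul_assoc]; gcongr; exact le_abs_self C
    _ ≤ ε * ‖y - x‖ := by gcongr

theorem neg_mem_frechetNormalCone_of_isLocalMinOn {Ω : Set E} {q w : E} {φ : E → ℝ} (hq : q ∈ Ω)
    (hmin : IsLocalMinOn φ Ω q) (C : ℝ)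
    (hφ : ∀ᶠ y in 𝓝 q, φ y ≤ φ q + ⟪w, y - q⟫ + C * ‖y - q‖ ^ 2) :
    -w ∈ FrechetNormalCone Ω q := by
  refine mem_frechetNormalCone_of_eventually_inner_le hq C ?_
  filter_upwards [hmin, nhdsWithin_le_nhds hφ] with y hmin hφ
  rw [inner_neg_left]
  linarith

theorem mkP_mem_frechetNormalCone_epiSet {f : E → EReal} {p ξ : E} {t C : ℝ} (hfp : f p = t)
    (hC : 0 ≤ C) (h : ∀ᶠ y in 𝓝 p, ((t + ⟪ξ, y - p⟫ - C * ‖y - p‖ ^ 2 : ℝ) : EReal) ≤ f y) :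
    mkP ξ (-1) ∈ FrechetNormalCone (epiSet f) (mkP p t) := by
  refine mem_frechetNormalCone_of_eventually_inner_le (by simp [epiSet, mkP, hfp]) C ?_
  have hfst : Tendsto WithLp.fst (𝓝 (mkP p t)) (𝓝 p) := (WithLp.continuous_fst 2 E ℝ).tendsto _
  filter_upwards [nhdsWithin_le_nhds (hfst.eventually h), self_mem_nhdsWithin] with z hz hzepi
  have hfz : t + ⟪ξ, z.fst - p⟫ - C * ‖z.fst - p‖ ^ 2 ≤ z.snd := by exact_mod_cast hz.trans hzepi
  have hdist : ‖z.fst - p‖ ≤ ‖z - mkP p t‖ := by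
    simpa [dist_eq_norm, mkP] using WithLp.dist_fst_le z (mkP p t)
  calc ⟪mkP ξ (-1), z - mkP p t⟫ = ⟪ξ, z.fst - p⟫ - (z.snd - t) := by simp [mkP]; ring
    _ ≤ C * ‖z.fst - p‖ ^ 2 := by linarith
    _ ≤ C * ‖z - mkP p t‖ ^ 2 := by gcongr

theorem mkP_neg_mem_frechetNormalCone_epiSet_of_isLocalMin {f : E → EReal} {φ : E → ℝ}
    {p w : E} {t C : ℝ} (hfp : f p = t) (hC : 0 ≤ C)
    (hmin : IsLocalMin (fun y => f y + (φ y : EReal)) p)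
    (hφ : ∀ᶠ y in 𝓝 p, φ y ≤ φ p + ⟪w, y - p⟫ + C * ‖y - p‖ ^ 2) :
    mkP (-w) (-1) ∈ FrechetNormalCone (epiSet f) (mkP p t) := by
  refine mkP_mem_frechetNormalCone_epiSet hfp hC ?_
  filter_upwards [hmin, hφ] with y hmin hφ
  have hle : ((t + φ p - φ y : ℝ) : EReal) ≤ f y := by
    rw [EReal.coe_sub, EReal.coe_add, ← hfp]
    exact EReal.sub_le_of_le_add hmin
  refine le_trans (EReal.coe_le_coe_iff.mpr ?_) hle
  rw [inner_neg_left]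
  linarith

theorem frechetNormalCone_epiSet_max_zero (g : E → EReal) (p : E) {t : ℝ} (ht : 0 < t) :
    FrechetNormalCone (epiSet fun y => max (g y) 0) (mkP p t) =
      FrechetNormalCone (epiSet g) (mkP p t) := by
  refine frechetNormalCone_congr (U := {z | 0 < z.snd})
    ((isOpen_lt continuous_const (WithLp.continuous_snd 2 E ℝ)).mem_nhds ht) ?_
  ext z
  simp only [epiSet, Set.mem_inter_iff, Set.mem_ofPred_eq, max_le_iff]
  constructor
  · exact fun h => ⟨h.1.1, h.2⟩
  · exact fun h => ⟨⟨h.1, by exact_mod_cast h.2.le⟩, h.2⟩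

end NormalCones

theorem EReal.exists_eq_coe_of_coe_mul_lt {α d : ℝ} (hα : 0 < α) {X : EReal} (hX : 0 ≤ X)
    (h : (α : EReal) * X < d) : ∃ G : ℝ, X = G ∧ α * G < d := by
  induction X with
  | bot => exact absurd hX (by simp)
  | coe G => exact ⟨G, rfl, by exact_mod_cast h⟩
  | top => rw [EReal.coe_mul_top_of_pos hα] at h; exact absurd h not_top_lt

theorem EReal.exists_eq_coe_of_add_coe_le {X Y : EReal} (hX : 0 ≤ X) (hY : Y ≠ ⊤) {a : ℝ}
    (h : X + a ≤ Y) : ∃ t : ℝ, X = t := by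
  induction X with
  | bot => exact absurd hX (by simp)
  | coe t => exact ⟨t, rfl⟩
  | top => exact absurd (top_le_iff.mp (EReal.top_add_coe a ▸ h)) hY

theorem LowerSemicontinuous.add_coe {α : Type*} [TopologicalSpace α] {f : α → EReal}
    (hf : LowerSemicontinuous f) {φ : α → ℝ} (hφ : Continuous φ) :
    LowerSemicontinuous fun z => f z + (φ z : EReal) :=
  hf.add' (continuous_coe_real_ereal.comp hφ).lowerSemicontinuous
    fun _ => EReal.continuousAt_add (.inr (EReal.coe_ne_bot _)) (.inr (EReal.coe_ne_top _))

section Minimizers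

variable {E : Type*} [NormedAddCommGroup E]

/-- Doubled-variable penalization of `f + h` around `u`: evaluating `f` and `h` at separate points
lets their normals be computed separately at a minimizer; `‖z.1 - u‖²` pins minimizers to `u`. -/
noncomputable def penalized (f : E → EReal) (h : E → ℝ) (u : E) (m : ℝ) (z : E × E) : EReal :=
  f z.1 + ((h z.2 + m / 2 * ‖z.1 - z.2‖ ^ 2 + ‖z.1 - u‖ ^ 2 : ℝ) : EReal)

theorem LowerSemicontinuous.penalized {f : E → EReal} (hf : LowerSemicontinuous f) {h : E → ℝ}
    (hh : Continuous h) (u : E) (m : ℝ) : LowerSemicontinuous (penalized f h u m) :=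
  (hf.comp continuous_fst).add_coe (by fun_prop)

theorem tendsto_norm_sub_of_penalized_le {f : E → EReal} (hf0 : ∀ y, 0 ≤ f y) {h : E → ℝ}
    (hh0 : ∀ y, 0 ≤ h y) {u : E} {p q : ℕ → E} {M : ℝ}
    (hpq : ∀ m : ℕ, penalized f h u m (p m, q m) ≤ M) :
    Tendsto (fun m => ‖p m - q m‖) atTop (𝓝 0) := by
  have hpen : ∀ m : ℕ, m / 2 * ‖p m - q m‖ ^ 2 ≤ M := by
    intro m
    have : h (q m) + m / 2 * ‖p m - q m‖ ^ 2 + ‖p m - u‖ ^ 2 ≤ M :=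
      EReal.coe_le_coe_iff.mp ((le_add_of_nonneg_left (hf0 (p m))).trans (hpq m))
    nlinarith [hh0 (q m), sq_nonneg ‖p m - u‖]
  have hlim : Tendsto (fun m : ℕ => √(2 * M / m)) atTop (𝓝 0) := by
    simpa using (tendsto_const_div_atTop_nhds_zero_nat (2 * M)).sqrt
  refine squeeze_zero' (Eventually.of_forall fun m => norm_nonneg _) ?_ hlim
  filter_upwards [eventually_gt_atTop 0] with m hm
  refine Real.le_sqrt_of_sq_le ((le_div_iff₀ (by positivity)).mpr ?_)
  linarith [hpen m]

theorem exists_near_of_penalized_le [ProperSpace E] {f : E → EReal} (hf : LowerSemicontinuous f)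
    (hf0 : ∀ y, 0 ≤ f y) {h : E → ℝ} (hh : Continuous h) (hh0 : ∀ y, 0 ≤ h y) {C : Set E}
    (hC : IsClosed C) {u : E} (hu : IsMinOn (fun y => f y + (h y : EReal)) C u) (hfu : f u ≠ ⊤)
    {r : ℝ} {p q : ℕ → E} (hp : ∀ m, p m ∈ closedBall u r) (hq : ∀ m, q m ∈ C)
    (hpq : ∀ m : ℕ, penalized f h u m (p m, q m) ≤ f u + (h u : EReal))
    {ε : ℝ} (hε : 0 < ε) : ∃ m, ‖p m - u‖ < ε ∧ ‖q m - u‖ < ε := by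
  obtain ⟨s, hs⟩ := EReal.exists_eq_coe_of_add_coe_le (hf0 u) hfu (a := 0) (by simp)
  set M := s + h u
  have hM : f u + (h u : EReal) = M := by rw [hs, EReal.coe_add]
  obtain ⟨x, -, φ, hφ, hpx⟩ := tendsto_subseq_of_bounded isBounded_closedBall hp
  have hqx : Tendsto (fun j => q (φ j)) atTop (𝓝 x) := by
    have hpq0 := tendsto_norm_sub_of_penalized_le hf0 hh0 fun m => (hpq m).trans hM.le
    simpa using hpx.sub (tendsto_zero_iff_norm_tendsto_zero.mpr (hpq0.comp hφ.tendsto_atTop))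
  have hxM : penalized f h u 0 (x, x) ≤ M := by
    refine ((hf.penalized hh u 0).isClosed_preimage M).mem_of_tendsto (hpx.prodMk_nhds hqx)
      (Eventually.of_forall fun j => le_trans ?_ ((hpq (φ j)).trans hM.le))
    refine add_le_add le_rfl (EReal.coe_le_coe_iff.mpr ?_)
    have : 0 ≤ (φ j : ℝ) / 2 * ‖p (φ j) - q (φ j)‖ ^ 2 := by positivity
    simp only [Function.comp_apply]
    linarith
  have hMx : (M : EReal) ≤ f x + (h x : EReal) :=
    hM ▸ hu (hC.mem_of_tendsto hqx (.of_forall fun j => hq (φ j)))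
  have hxu : x = u := by
    obtain ⟨t, ht⟩ := EReal.exists_eq_coe_of_add_coe_le (hf0 x) (EReal.coe_ne_top M) hxM
    rw [penalized, ht, ← EReal.coe_add] at hxM
    rw [ht, ← EReal.coe_add] at hMx
    norm_cast at hxM hMx
    have : ‖x - u‖ = 0 := by nlinarith [norm_nonneg (x - u)]
    rwa [norm_eq_zero, sub_eq_zero] at this
  subst hxu
  obtain ⟨j, hj⟩ := ((hpx.eventually (ball_mem_nhds x hε)).and
    (hqx.eventually (ball_mem_nhds x hε))).exists
  exact ⟨φ j, by simpa [dist_eq_norm] using hj⟩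

theorem exists_isMinOn_closedBall_of_lt [ProperSpace E] {Ω : Set E} (hΩ : IsClosed Ω)
    {F : E → EReal} (hF : LowerSemicontinuous F) (hF0 : ∀ y, 0 ≤ F y) {x : E} (hx : x ∈ Ω) {c ρ : ℝ}
    (hc : 0 < c) (hρ : 0 < ρ) (hxρ : F x < (c * ρ ^ 2 : ℝ)) :
    ∃ u ∈ Ω, ‖u - x‖ < ρ ∧ F u ≤ F x ∧
      IsMinOn (fun y => F y + ((c * ‖y - x‖ ^ 2 : ℝ) : EReal))
        (Ω ∩ closedBall u (ρ - ‖u - x‖)) u := by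
  have hxK : x ∈ Ω ∩ closedBall x ρ := ⟨hx, mem_closedBall_self hρ.le⟩
  obtain ⟨u, ⟨huΩ, -⟩, hmin⟩ :=
    ((hF.add_coe (by fun_prop : Continuous fun y => c * ‖y - x‖ ^ 2)).lowerSemicontinuousOn
      _).exists_isMinOn ⟨x, hxK⟩ ((isCompact_closedBall x ρ).inter_left hΩ)
  have hux : F u + ((c * ‖u - x‖ ^ 2 : ℝ) : EReal) ≤ F x := by
    simpa using isMinOn_iff.mp hmin x hxK
  have hlt : c * ‖u - x‖ ^ 2 < c * ρ ^ 2 :=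
    EReal.coe_lt_coe_iff.mp (((le_add_of_nonneg_left (hF0 u)).trans hux).trans_lt hxρ)
  have hux_lt : ‖u - x‖ < ρ :=
    lt_of_pow_lt_pow_left₀ 2 hρ.le (lt_of_mul_lt_mul_left hlt hc.le)
  refine ⟨u, huΩ, hux_lt, (le_add_of_nonneg_right (EReal.coe_nonneg.mpr (by positivity))).trans hux,
    hmin.on_subset (inter_subset_inter_right _ (closedBall_subset_closedBall' ?_))⟩
  rw [dist_eq_norm]
  linarith

theorem exists_isMinOn_of_lt_infDist [ProperSpace E] {Ω : Set E} (hΩ : IsClosed Ω) {g : E → EReal}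
    (hg : LowerSemicontinuous g) {x : E} (hx : x ∈ Ω) {α : ℝ} (hα : 0 < α)
    (hbad : (α : EReal) * max (g x) 0 < infDist x {y ∈ Ω | g y ≤ 0}) :
    ∃ u ∈ Ω, ‖u - x‖ < infDist x {y ∈ Ω | g y ≤ 0} / 2 ∧ 0 < g u ∧ g u ≠ ⊤ ∧
      IsMinOn (fun y => max (g y) 0 +
          ((4 / (α * infDist x {y ∈ Ω | g y ≤ 0}) * ‖y - x‖ ^ 2 : ℝ) : EReal))
        (Ω ∩ closedBall u (infDist x {y ∈ Ω | g y ≤ 0} / 2 - ‖u - x‖)) u := by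
  set d := infDist x {y ∈ Ω | g y ≤ 0}
  have hF0 : ∀ y, 0 ≤ max (g y) 0 := fun y => le_max_right _ _
  obtain ⟨G, hG, hGd⟩ := EReal.exists_eq_coe_of_coe_mul_lt hα (hF0 x) hbad
  have hd : 0 < d := lt_of_le_of_lt (mul_nonneg hα.le (EReal.coe_nonneg.mp (hG ▸ hF0 x))) hGd
  have hGc : G < 4 / (α * d) * (d / 2) ^ 2 := by
    have : 4 / (α * d) * (d / 2) ^ 2 = d / α := by field_simp; ring
    rw [this, lt_div_iff₀ hα]
    linarith
  obtain ⟨u, huΩ, hux, hFu, hmin⟩ := exists_isMinOn_closedBall_of_lt hΩ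
    (hg.sup lowerSemicontinuous_const) hF0 hx (by positivity) (half_pos hd)
    (hG ▸ EReal.coe_lt_coe_iff.mpr hGc)
  have hgu : 0 < g u := by
    by_contra! hle
    have : d ≤ ‖u - x‖ := by
      rw [norm_sub_rev, ← dist_eq_norm]
      exact infDist_le_dist_of_mem ⟨huΩ, hle⟩
    linarith
  have hgu_top : g u ≠ ⊤ := by
    rw [← max_eq_left hgu.le]
    exact (hFu.trans_lt (hG ▸ EReal.coe_lt_top G)).ne
  exact ⟨u, huΩ, hux, hgu, hgu_top, hmin⟩

end Minimizers

section FuzzySumRule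

variable {E : Type*} [NormedAddCommGroup E] [InnerProductSpace ℝ E]

theorem norm_sub_sq_eq_add_inner (y p b : E) :
    ‖y - b‖ ^ 2 = ‖p - b‖ ^ 2 + 2 * ⟪p - b, y - p⟫ + ‖y - p‖ ^ 2 := by
  rw [← norm_add_sq_real, sub_add_sub_cancel']

variable {Ω : Set E} {f : E → EReal} {a u p q : E} {c m r t : ℝ}

theorem mkP_mem_frechetNormalCone_of_isMinOn_penalized (hm : 0 ≤ m) (hfp : f p = t)
    (hmin : IsMinOn (penalized f (fun y => c * ‖y - a‖ ^ 2) u m) (closedBall u r ×ˢ Ω) (p, q))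
    (hp : ‖p - u‖ < r) (hq : q ∈ Ω) :
    mkP (-(m • (p - q) + (2 : ℝ) • (p - u))) (-1) ∈ FrechetNormalCone (epiSet f) (mkP p t) := by
  refine mkP_neg_mem_frechetNormalCone_epiSet_of_isLocalMin hfp (C := m / 2 + 1) (by positivity)
    (φ := fun y => c * ‖q - a‖ ^ 2 + m / 2 * ‖y - q‖ ^ 2 + ‖y - u‖ ^ 2) ?_ (.of_forall fun y => ?_)
  · filter_upwards [isOpen_ball.mem_nhds (mem_ball_iff_norm.mpr hp)] with y hy
    exact isMinOn_iff.mp hmin (y, q) ⟨ball_subset_closedBall hy, hq⟩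
  · rw [inner_add_left, real_inner_smul_left, real_inner_smul_left]
    linear_combination m / 2 * norm_sub_sq_eq_add_inner y p q + norm_sub_sq_eq_add_inner y p u

theorem neg_mem_frechetNormalCone_of_isMinOn_penalized (hfp : f p = t)
    (hmin : IsMinOn (penalized f (fun y => c * ‖y - a‖ ^ 2) u m) (closedBall u r ×ˢ Ω) (p, q))
    (hp : p ∈ closedBall u r) (hq : q ∈ Ω) :
    -((2 * c) • (q - a) + m • (q - p)) ∈ FrechetNormalCone Ω q := by
  refine neg_mem_frechetNormalCone_of_isLocalMinOn hq
    (φ := fun y => c * ‖y - a‖ ^ 2 + m / 2 * ‖p - y‖ ^ 2) ?_ (c + m / 2) (.of_forall fun y => ?_)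
  · filter_upwards [self_mem_nhdsWithin] with y hy
    have := isMinOn_iff.mp hmin (p, y) ⟨hp, hy⟩
    rw [penalized, penalized, hfp, ← EReal.coe_add, ← EReal.coe_add, EReal.coe_le_coe_iff] at this
    linarith
  · rw [inner_add_left, real_inner_smul_left, real_inner_smul_left, norm_sub_rev p y,
      norm_sub_rev p q]
    linear_combination c * norm_sub_sq_eq_add_inner y q a + m / 2 * norm_sub_sq_eq_add_inner y q p

theorem norm_neg_add_neg_add_smul_le (p q u a : E) (m : ℝ) {c : ℝ} (hc : 0 ≤ c) :
    ‖-(m • (p - q) + (2 : ℝ) • (p - u)) + -((2 * c) • (q - a) + m • (q - p)) + (2 * c) • (u - a)‖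
      ≤ 2 * ‖p - u‖ + 2 * c * ‖q - u‖ := by
  calc _ = ‖(-2 : ℝ) • (p - u) + (-2 * c) • (q - u)‖ := by congr 1; module
    _ ≤ ‖(-2 : ℝ) • (p - u)‖ + ‖(-2 * c) • (q - u)‖ := norm_add_le _ _
    _ = 2 * ‖p - u‖ + 2 * c * ‖q - u‖ := by
      rw [norm_smul, norm_smul, Real.norm_eq_abs, Real.norm_eq_abs, abs_of_neg (by norm_num),
        abs_of_nonpos (by linarith)]
      ring

theorem exists_frechetNormals_near_of_isMinOn [ProperSpace E] (hΩ : IsClosed Ω)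
    (hf : LowerSemicontinuous f) (hf0 : ∀ y, 0 ≤ f y) (hu : u ∈ Ω) (hfu : f u ≠ ⊤) (hc : 0 ≤ c)
    (hr : 0 < r)
    (hmin : IsMinOn (fun y => f y + ((c * ‖y - a‖ ^ 2 : ℝ) : EReal)) (Ω ∩ closedBall u r) u)
    {δ : ℝ} (hδ : 0 < δ) :
    ∃ p q ξ η, ‖p - u‖ < δ ∧ ‖q - u‖ < δ ∧ f p ≠ ⊤ ∧
      mkP ξ (-1) ∈ FrechetNormalCone (epiSet f) (mkP p (f p).toReal) ∧
      η ∈ FrechetNormalCone Ω q ∧ ‖ξ + η + (2 * c) • (u - a)‖ ≤ δ := by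
  set B := closedBall u r
  set h : E → ℝ := fun y => c * ‖y - a‖ ^ 2
  have huK : (u, u) ∈ B ×ˢ (Ω ∩ B) := ⟨mem_closedBall_self hr.le, hu, mem_closedBall_self hr.le⟩
  choose z hzK hzmin using fun m : ℕ =>
    ((hf.penalized (by fun_prop : Continuous h) u m).lowerSemicontinuousOn _).exists_isMinOn
      ⟨_, huK⟩ ((isCompact_closedBall u r).prod ((isCompact_closedBall u r).inter_left hΩ))
  have hzu : ∀ m : ℕ, penalized f h u m (z m) ≤ f u + (h u : EReal) :=
    fun m => (isMinOn_iff.mp (hzmin m) _ huK).trans_eq (by simp [penalized, h])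
  set ε := min r (δ / (2 * (1 + c)))
  have hεr : ε ≤ r := min_le_left _ _
  have hεδ : 2 * (1 + c) * ε ≤ δ := by
    have := min_le_right r (δ / (2 * (1 + c)))
    rwa [le_div_iff₀ (by positivity), mul_comm] at this
  obtain ⟨m, hpu, hqu⟩ := exists_near_of_penalized_le hf hf0 (by fun_prop) (fun y => by positivity)
    (hΩ.inter isClosed_closedBall) hmin hfu (fun m => (hzK m).1) (fun m => (hzK m).2) hzu
    (ε := ε) (by positivity)
  obtain ⟨⟨p, q⟩, hzm⟩ : ∃ w, z m = w := ⟨_, rfl⟩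
  have hpqK := hzK m
  have hpqmin := hzmin m
  have hpqu := hzu m
  simp only [hzm] at hpqK hpqmin hpqu hpu hqu
  obtain ⟨t, ht⟩ := EReal.exists_eq_coe_of_add_coe_le (hf0 p)
    (EReal.add_lt_top hfu (EReal.coe_ne_top _)).ne hpqu
  have hΩB : FrechetNormalCone (Ω ∩ B) q = FrechetNormalCone Ω q :=
    frechetNormalCone_congr (isOpen_ball.mem_nhds (mem_ball_iff_norm.mpr (hqu.trans_le hεr)))
      (by rw [inter_assoc, inter_eq_right.mpr ball_subset_closedBall])
  refine ⟨p, q, _, _, by nlinarith, by nlinarith, ht ▸ EReal.coe_ne_top t, ?_,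
    hΩB ▸ neg_mem_frechetNormalCone_of_isMinOn_penalized ht hpqmin hpqK.1 hpqK.2,
    (norm_neg_add_neg_add_smul_le p q u a m hc).trans (by nlinarith)⟩
  rw [ht, EReal.toReal_coe]
  exact mkP_mem_frechetNormalCone_of_isMinOn_penalized m.cast_nonneg ht hpqmin
    (hpu.trans_le hεr) hpqK.2

theorem exists_frechetNormals_near_of_lt_infDist [ProperSpace E] (hΩ : IsClosed Ω)
    {g : E → EReal} (hg : LowerSemicontinuous g) {x : E} (hx : x ∈ Ω) {α : ℝ} (hα : 0 < α)
    (hbad : (α : EReal) * max (g x) 0 < infDist x {y ∈ Ω | g y ≤ 0}) :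
    ∃ p q ξ η, ‖p - x‖ < infDist x {y ∈ Ω | g y ≤ 0} / 2 + 1 ∧
      ‖q - x‖ < infDist x {y ∈ Ω | g y ≤ 0} / 2 + 1 ∧ g p ≠ ⊤ ∧
      mkP ξ (-1) ∈ FrechetNormalCone (epiSet g) (mkP p (g p).toReal) ∧
      η ∈ FrechetNormalCone Ω q ∧ ‖ξ + η‖ ≤ 5 / α := by
  obtain ⟨u, huΩ, hux, hgu, hgu_top, hmin⟩ := exists_isMinOn_of_lt_infDist hΩ hg hx hα hbad
  set d := infDist x {y ∈ Ω | g y ≤ 0}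
  have hd : 0 < d := by linarith [norm_nonneg (u - x)]
  set c := 4 / (α * d)
  obtain ⟨ε, hε, hεg⟩ := Metric.mem_nhds_iff.mp (hg u 0 hgu)
  obtain ⟨p, q, ξ, η, hpu, hqu, hgp_top, hξ, hη, hsum⟩ :=
    exists_frechetNormals_near_of_isMinOn hΩ (hg.sup lowerSemicontinuous_const)
      (fun y => le_max_right _ _) huΩ (by rwa [max_eq_left hgu.le]) (by positivity)
      (by linarith) hmin (δ := min (1 / α) (min 1 ε)) (by positivity)
  have hgp : 0 < g p :=
    hεg (mem_ball_iff_norm.mpr (hpu.trans_le ((min_le_right _ _).trans (min_le_right _ _))))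
  have hpx : ∀ w, ‖w - u‖ < min (1 / α) (min 1 ε) → ‖w - x‖ < d / 2 + 1 := fun w hw =>
    (norm_sub_le_norm_sub_add_norm_sub w u x).trans_lt
      (by linarith [hw.trans_le ((min_le_right _ _).trans (min_le_left _ _))])
  rw [max_eq_left hgp.le] at hgp_top hξ
  rw [frechetNormalCone_epiSet_max_zero g p (EReal.toReal_pos hgp hgp_top)] at hξ
  have hv : ‖(2 * c) • (u - x)‖ ≤ 4 / α := by
    rw [norm_smul, Real.norm_of_nonneg (by positivity)]
    calc 2 * c * ‖u - x‖ ≤ 2 * c * (d / 2) := by gcongr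
      _ = 4 / α := by simp only [c]; field_simp
  refine ⟨p, q, ξ, η, hpx p hpu, hpx q hqu, hgp_top, hξ, hη, ?_⟩
  calc ‖ξ + η‖ = ‖(ξ + η + (2 * c) • (u - x)) - (2 * c) • (u - x)‖ := by rw [add_sub_cancel_right]
    _ ≤ 1 / α + 4 / α := (norm_sub_le _ _).trans (add_le_add (hsum.trans (min_le_left _ _)) hv)
    _ = 5 / α := by ring

end FuzzySumRule

theorem tendsto_norm_atTop_of_norm_sub_lt_infDist {E : Type*} [NormedAddCommGroup E] {S : Set E}
    (hS : S.Nonempty) {x p : ℕ → E} (hx : Tendsto (fun k => ‖x k‖) atTop atTop)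
    (hp : ∀ k, ‖p k - x k‖ < infDist (x k) S / 2 + 1) :
    Tendsto (fun k => ‖p k‖) atTop atTop := by
  obtain ⟨s, hs⟩ := hS
  refine tendsto_atTop_mono (fun k => ?_)
    (tendsto_atTop_add_const_right _ (-(‖s‖ / 2 + 1)) (hx.atTop_div_const two_pos))
  have h1 : infDist (x k) S ≤ ‖x k‖ + ‖s‖ :=
    (infDist_le_dist_of_mem hs).trans ((dist_eq_norm _ _).trans_le (norm_sub_le _ _))
  have h2 := norm_sub_norm_le (x k) (p k)
  rw [norm_sub_rev] at h2
  linarith [hp k]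

section AtInfinity

variable {E : Type*} [NormedAddCommGroup E] [InnerProductSpace ℝ E]
variable {f : E → EReal} {Ω : Set E} {p q ξ η : ℕ → E}

theorem mem_subInfty_of_tendsto (hp : Tendsto (fun k => ‖p k‖) atTop atTop)
    (hfp : ∀ k, f (p k) ≠ ⊤)
    (hξ : ∀ k, mkP (ξ k) (-1) ∈ FrechetNormalCone (epiSet f) (mkP (p k) (f (p k)).toReal))
    {ζ : E} (hζ : Tendsto ξ atTop (𝓝 ζ)) : ζ ∈ subInfty f :=
  ⟨p, fun k => mkP (ξ k) (-1), hfp, hp,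
    fun k => FrechetNormalCone.subset_limitingNormalCone _ _ (hξ k),
    hζ.prodMk_nhds tendsto_const_nhds⟩

theorem mem_singSubInfty_of_tendsto (hp : Tendsto (fun k => ‖p k‖) atTop atTop)
    (hfp : ∀ k, f (p k) ≠ ⊤)
    (hξ : ∀ k, mkP (ξ k) (-1) ∈ FrechetNormalCone (epiSet f) (mkP (p k) (f (p k)).toReal))
    {s : ℕ → ℝ} (hs : ∀ k, 0 < s k) (hs0 : Tendsto s atTop (𝓝 0)) {ζ : E}
    (hζ : Tendsto (fun k => s k • ξ k) atTop (𝓝 ζ)) : ζ ∈ singSubInfty f := by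
  refine ⟨p, fun k => mkP (s k • ξ k) (-s k), hfp, hp,
    fun k => FrechetNormalCone.subset_limitingNormalCone _ _ ?_,
    hζ.prodMk_nhds (by simpa using hs0.neg)⟩
  have hmk : s k • mkP (ξ k) (-1) = mkP (s k • ξ k) (-s k) := by
    unfold mkP
    simp [← WithLp.toLp_smul]
  simpa only [hmk] using FrechetNormalCone.smul_mem (hs k) (hξ k)

theorem exists_ne_zero_mem_singSubInfty_inter_of_tendsto_norm_atTop [ProperSpace E]
    (hp : Tendsto (fun k => ‖p k‖) atTop atTop) (hq : Tendsto (fun k => ‖q k‖) atTop atTop)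
    (hfp : ∀ k, f (p k) ≠ ⊤)
    (hξ : ∀ k, mkP (ξ k) (-1) ∈ FrechetNormalCone (epiSet f) (mkP (p k) (f (p k)).toReal))
    (hη : ∀ k, η k ∈ FrechetNormalCone Ω (q k)) (hsum : Tendsto (fun k => ξ k + η k) atTop (𝓝 0))
    (hξ_top : Tendsto (fun k => ‖ξ k‖) atTop atTop) :
    ∃ ζ ≠ 0, ζ ∈ singSubInfty f ∩ -NormalConeAtInfty Ω := by
  set s : ℕ → ℝ := fun k => (1 + ‖ξ k‖)⁻¹
  have hs : ∀ k, 0 < s k := fun k => by positivity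
  have hs0 : Tendsto s atTop (𝓝 0) :=
    tendsto_inv_atTop_zero.comp (tendsto_atTop_add_const_left _ 1 hξ_top)
  have hnorm : ∀ k, ‖s k • ξ k‖ = 1 - s k := fun k => by
    rw [norm_smul, Real.norm_of_nonneg (hs k).le]
    simp only [s]
    field_simp
    ring
  obtain ⟨ζ, -, φ, hφ, hζ⟩ :=
    tendsto_subseq_of_bounded (isBounded_closedBall (x := (0 : E)) (r := 1))
      fun k => mem_closedBall_zero_iff.mpr ((hnorm k).trans_le (by linarith [hs k]))
  have hφ_top := hφ.tendsto_atTop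
  have hζ1 : ‖ζ‖ = 1 := tendsto_nhds_unique hζ.norm
    (by simpa [Function.comp_def, hnorm] using (hs0.comp hφ_top).const_sub 1)
  have hsη : Tendsto (fun j => s (φ j) • η (φ j)) atTop (𝓝 (-ζ)) := by
    simpa [smul_add] using ((hs0.comp hφ_top).smul (hsum.comp hφ_top)).sub hζ
  refine ⟨ζ, norm_ne_zero_iff.mp (by rw [hζ1]; exact one_ne_zero),
    mem_singSubInfty_of_tendsto (hp.comp hφ_top) (fun j => hfp _) (fun j => hξ _) (fun j => hs _)
      (hs0.comp hφ_top) hζ, ?_⟩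
  exact Set.mem_neg.mpr ⟨q ∘ φ, fun j => s (φ j) • η (φ j),
    fun j => FrechetNormalCone.smul_mem (hs _) (hη _), hq.comp hφ_top, hsη⟩

theorem zero_mem_subInfty_add_normalConeAtInfty_of_not_tendsto_norm_atTop [ProperSpace E]
    (hp : Tendsto (fun k => ‖p k‖) atTop atTop) (hq : Tendsto (fun k => ‖q k‖) atTop atTop)
    (hfp : ∀ k, f (p k) ≠ ⊤)
    (hξ : ∀ k, mkP (ξ k) (-1) ∈ FrechetNormalCone (epiSet f) (mkP (p k) (f (p k)).toReal))
    (hη : ∀ k, η k ∈ FrechetNormalCone Ω (q k)) (hsum : Tendsto (fun k => ξ k + η k) atTop (𝓝 0))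
    (hξ_top : ¬Tendsto (fun k => ‖ξ k‖) atTop atTop) :
    (0 : E) ∈ subInfty f + NormalConeAtInfty Ω := by
  rw [Filter.tendsto_atTop] at hξ_top
  push Not at hξ_top
  obtain ⟨C, hC⟩ := hξ_top
  obtain ⟨ζ, -, φ, hφ, hζ⟩ :=
    tendsto_subseq_of_frequently_bounded (isBounded_ball (x := (0 : E)) (r := C))
      (by simpa using hC)
  have hφ_top := hφ.tendsto_atTop
  have hηζ : Tendsto (fun j => η (φ j)) atTop (𝓝 (-ζ)) := by simpa using (hsum.comp hφ_top).sub hζ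
  exact ⟨ζ, mem_subInfty_of_tendsto (hp.comp hφ_top) (fun j => hfp _) (fun j => hξ _) hζ,
    -ζ, ⟨fun j => q (φ j), fun j => η (φ j), fun j => hη _, hq.comp hφ_top, hηζ⟩, add_neg_cancel ζ⟩

end AtInfinity

theorem error_bound_at_infinity_general {n : ℕ} (Ω : Set (EuclideanSpace ℝ (Fin n)))
    (g : EuclideanSpace ℝ (Fin n) → EReal)
    (hΩcl : IsClosed Ω)
    (hg : LowerSemicontinuous g)
    (S : Set (EuclideanSpace ℝ (Fin n))) (hS : S = {x ∈ Ω | g x ≤ 0})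
    (hSne : S.Nonempty)
    (hCQ : singSubInfty g ∩ (-(NormalConeAtInfty Ω)) = {0})
    (hreg : (0 : EuclideanSpace ℝ (Fin n)) ∉ subInfty g + NormalConeAtInfty Ω) :
    ∃ α > (0:ℝ), ∃ R > (0:ℝ), ∀ x ∈ Ω, R < ‖x‖ →
      (Metric.infDist x S : EReal) ≤ (α : EReal) * max (g x) 0 := by
  subst hS
  by_contra! hcon
  choose x hxΩ hxR hbad using fun k : ℕ =>
    hcon (k + 1) k.cast_add_one_pos (k + 1) k.cast_add_one_pos
  choose p q ξ η hpx hqx hgp hξ hη hsum using fun k =>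
    exists_frechetNormals_near_of_lt_infDist hΩcl hg (hxΩ k) k.cast_add_one_pos (hbad k)
  have hx : Tendsto (fun k => ‖x k‖) atTop atTop := tendsto_atTop_mono (fun k => (hxR k).le)
    (tendsto_atTop_add_const_right _ 1 tendsto_natCast_atTop_atTop)
  have hp := tendsto_norm_atTop_of_norm_sub_lt_infDist hSne hx hpx
  have hq := tendsto_norm_atTop_of_norm_sub_lt_infDist hSne hx hqx
  have hsum0 : Tendsto (fun k => ξ k + η k) atTop (𝓝 0) := squeeze_zero_norm hsum
    (by simpa only [mul_one_div, mul_zero] using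
      (tendsto_one_div_add_atTop_nhds_zero_nat (𝕜 := ℝ)).const_mul 5)
  by_cases hξ_top : Tendsto (fun k => ‖ξ k‖) atTop atTop
  · obtain ⟨ζ, hζ0, hζ⟩ := exists_ne_zero_mem_singSubInfty_inter_of_tendsto_norm_atTop
      hp hq hgp hξ hη hsum0 hξ_top
    exact hζ0 (by simpa [hCQ] using hζ)
  · exact hreg (zero_mem_subInfty_add_normalConeAtInfty_of_not_tendsto_norm_atTop
      hp hq hgp hξ hη hsum0 hξ_top)

/-- Theorem 3.2: sufficient conditions for an error bound at infinity
for `S = {x ∈ Ω : g(x) ≤ 0}`. -/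
theorem error_bound_at_infinity {n : ℕ} (Ω : Set (EuclideanSpace ℝ (Fin n)))
    (g : EuclideanSpace ℝ (Fin n) → EReal)
    (hΩne : Ω.Nonempty) (hΩcl : IsClosed Ω)
    (hg : LowerSemicontinuous g) (hgbot : ∀ x, g x ≠ ⊥)
    (hdomne : (Ω ∩ {x | g x ≠ ⊤}).Nonempty)
    (hdomunbdd : ¬ Bornology.IsBounded (Ω ∩ {x | g x ≠ ⊤}))
    (S : Set (EuclideanSpace ℝ (Fin n))) (hS : S = {x ∈ Ω | g x ≤ 0})
    (hSne : S.Nonempty)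
    (hCQ : singSubInfty g ∩ (-(NormalConeAtInfty Ω)) = {0})
    (hreg : (0 : EuclideanSpace ℝ (Fin n)) ∉ subInfty g + NormalConeAtInfty Ω) :
    ∃ α > (0:ℝ), ∃ R > (0:ℝ), ∀ x ∈ Ω, R < ‖x‖ →
      (Metric.infDist x S : EReal) ≤ (α : EReal) * max (g x) 0 :=
  error_bound_at_infinity_general Ω g hΩcl hg S hS hSne hCQ hreg
end

section
/- Let g: ℝ² → ℝ be given by g(x,y) = x² + y². Then the limiting subdifferential of g at infinity is empty: ∂g(∞) = ∅. -/
open Filter Topology Set Pointwise RealInnerProductSpace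

/-!
If `f` is differentiable at `x` and `(x, t)` lies in its epigraph, then for every direction `d` the
curve `δ ↦ (x + δ • d, t + f (x + δ • d) - f x)` stays in the epigraph and has velocity
`(d, ⟪∇f x, d⟫)` at `δ = 0`. A Fréchet normal `(u, s)` has nonpositive inner product with the
velocity of every curve leaving the base point inside the set, which forces `u = -s • ∇f x`.
When `∇f` is continuous this relation survives the limit defining limiting normals. For
`f = ‖·‖²` it reads `‖u‖ = 2 |s| ‖x‖`, so along `‖x_k‖ → ∞` with `s_k → -1` the normals `u_k`
cannot converge.
-/

theorem FrechetNormalCone.inner_nonpos_of_hasDerivWithinAt {F : Type*} [NormedAddCommGroup F]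
    [InnerProductSpace ℝ F] {Ω : Set F} {p v w : F} {γ : ℝ → F}
    (hv : v ∈ FrechetNormalCone Ω p) (hγ : HasDerivWithinAt γ w (Ioi 0) 0) (hγ₀ : γ 0 = p)
    (hγΩ : ∀ᶠ δ in 𝓝[>] 0, γ δ ∈ Ω) : ⟪v, w⟫ ≤ 0 := by
  have hslope : Tendsto (slope γ 0) (𝓝[>] 0) (𝓝 w) := by
    simpa using hasDerivWithinAt_iff_tendsto_slope.mp hγ
  have hγp : Tendsto γ (𝓝[>] 0) (𝓝[Ω] p) :=
    tendsto_nhdsWithin_iff.mpr ⟨hγ₀ ▸ hγ.continuousWithinAt.tendsto, hγΩ⟩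
  have hε : ∀ ε > (0 : ℝ), ⟪v, w⟫ ≤ ε * ‖w‖ := fun ε hε => by
    refine le_of_tendsto_of_tendsto (tendsto_const_nhds.inner hslope)
      (hslope.norm.const_mul ε) ?_
    filter_upwards [hγp.eventually (hv.2 ε hε), self_mem_nhdsWithin]
      with δ hδ (hδ₀ : 0 < δ)
    rw [slope_def_module, sub_zero, hγ₀, real_inner_smul_right, norm_smul,
      Real.norm_of_nonneg (inv_nonneg.2 hδ₀.le), mul_left_comm]
    exact mul_le_mul_of_nonneg_left hδ (inv_nonneg.2 hδ₀.le)
  have hlim : Tendsto (fun ε : ℝ => ε * ‖w‖) (𝓝[>] 0) (𝓝 0) := by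
    simpa using (tendsto_id (x := 𝓝 (0 : ℝ))).mono_left nhdsWithin_le_nhds |>.mul_const ‖w‖
  exact ge_of_tendsto hlim (eventually_nhdsWithin_of_forall hε)

theorem mem_epiSet_coe_iff {E : Type*} {f : E → ℝ} {p : WithLp 2 (E × ℝ)} :
    p ∈ epiSet (fun z => (f z : EReal)) ↔ f p.fst ≤ p.snd :=
  EReal.coe_le_coe_iff

theorem mkP_fst_snd {E : Type*} (p : WithLp 2 (E × ℝ)) : mkP p.fst p.snd = p := rfl

section Epigraph

variable {E : Type*} [NormedAddCommGroup E] [InnerProductSpace ℝ E]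

theorem inner_mkP (v : WithLp 2 (E × ℝ)) (x : E) (t : ℝ) :
    ⟪v, mkP x t⟫ = ⟪v.fst, x⟫ + v.snd * t := by
  simp [WithLp.prod_inner_apply, mkP, mul_comm]

theorem hasDerivAt_mkP {γ₁ : ℝ → E} {γ₂ : ℝ → ℝ} {w₁ : E} {w₂ δ : ℝ}
    (h₁ : HasDerivAt γ₁ w₁ δ) (h₂ : HasDerivAt γ₂ w₂ δ) :
    HasDerivAt (fun δ => mkP (γ₁ δ) (γ₂ δ)) (mkP w₁ w₂) δ :=
  (WithLp.prodContinuousLinearEquiv 2 ℝ E ℝ).symm.hasFDerivAt.comp_hasDerivAt δ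
    (h₁.prodMk h₂)

variable [CompleteSpace E] {f : E → ℝ}

theorem hasGradientAt_norm_sq (x : E) :
    HasGradientAt (fun x => ‖x‖ ^ 2) ((2 : ℝ) • x) x := by
  rw [hasGradientAt_iff_hasFDerivAt]
  refine (hasStrictFDerivAt_norm_sq x).hasFDerivAt.congr_fderiv ?_
  ext y
  simp [two_mul]

theorem FrechetNormalCone.fst_eq_neg_snd_smul_of_hasGradientAt {g : E} {p v : WithLp 2 (E × ℝ)}
    (hv : v ∈ FrechetNormalCone (epiSet fun z => (f z : EReal)) p)
    (hf : HasGradientAt f g p.fst) :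
    v.fst = -v.snd • g := by
  have hle (d : E) : ⟪v.fst + v.snd • g, d⟫ ≤ 0 := by
    have hline : HasDerivAt (fun δ : ℝ => p.fst + δ • d) d 0 := by
      simpa using ((hasDerivAt_id (0 : ℝ)).smul_const d).const_add p.fst
    have hfline : HasDerivAt (fun δ : ℝ => f (p.fst + δ • d)) ⟪g, d⟫ 0 :=
      (hasGradientAt_iff_hasFDerivAt.mp hf).comp_hasDerivAt_of_eq 0 hline (by simp)
    have hγ := hasDerivAt_mkP hline ((hfline.sub_const (f p.fst)).const_add p.snd)
    have hfp := mem_epiSet_coe_iff.mp hv.1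
    have := FrechetNormalCone.inner_nonpos_of_hasDerivWithinAt hv hγ.hasDerivWithinAt
      (by simp [mkP_fst_snd]) (Eventually.of_forall fun δ => mem_epiSet_coe_iff.mpr
        (by linarith : f (p.fst + δ • d) ≤ p.snd + (f (p.fst + δ • d) - f p.fst)))
    rwa [inner_mkP, ← real_inner_smul_left, ← inner_add_left] at this
  have hsq := hle (v.fst + v.snd • g)
  rw [real_inner_self_eq_norm_sq] at hsq
  rw [neg_smul, eq_neg_iff_add_eq_zero]
  exact norm_eq_zero.mp (by nlinarith [norm_nonneg (v.fst + v.snd • g)])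

variable {g : E → E}

theorem LimitingNormalCone.fst_eq_neg_snd_smul_of_hasGradientAt {p v : WithLp 2 (E × ℝ)}
    (hv : v ∈ LimitingNormalCone (epiSet fun z => (f z : EReal)) p)
    (hf : ∀ z, HasGradientAt f (g z) z) (hg : Continuous g) :
    v.fst = -v.snd • g p.fst := by
  obtain ⟨ps, vs, hvs_mem, hps, hvs⟩ := hv
  have hfst : Continuous fun q : WithLp 2 (E × ℝ) => q.fst := by fun_prop
  have hsnd : Continuous fun q : WithLp 2 (E × ℝ) => q.snd := by fun_prop
  have heq : (fun k => (vs k).fst) = fun k => -(vs k).snd • g (ps k).fst :=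
    funext fun k => FrechetNormalCone.fst_eq_neg_snd_smul_of_hasGradientAt (hvs_mem k) (hf _)
  have hlim : Tendsto (fun k => (vs k).fst) atTop (𝓝 v.fst) := (hfst.tendsto v).comp hvs
  refine tendsto_nhds_unique hlim ?_
  rw [heq]
  exact ((hsnd.tendsto v).comp hvs).neg.smul ((hg.tendsto _).comp ((hfst.tendsto p).comp hps))

theorem subInfty_eq_empty_of_tendsto_norm_gradient (hf : ∀ z, HasGradientAt f (g z) z)
    (hg : Continuous g) (hgrow : Tendsto (fun z => ‖g z‖) (Bornology.cobounded E) atTop) :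
    subInfty (fun z => (f z : EReal)) = ∅ := by
  refine eq_empty_iff_forall_notMem.mpr fun u hu => ?_
  obtain ⟨xs, ws, -, hxs, hws, hlim⟩ := hu
  have hnorm : (fun k => ‖(ws k).fst‖) = fun k => |(ws k).snd| * ‖g (xs k)‖ := by
    funext k
    rw [LimitingNormalCone.fst_eq_neg_snd_smul_of_hasGradientAt (hws k) hf hg, norm_smul,
      Real.norm_eq_abs, abs_neg]
    rfl
  have hsnd : Tendsto (fun k => |(ws k).snd|) atTop (𝓝 1) := by
    simpa using (continuous_snd.tendsto _).comp hlim |>.abs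
  refine not_tendsto_nhds_of_tendsto_atTop ?_ ‖u‖ ((continuous_fst.tendsto _).comp hlim).norm
  change Tendsto (fun k => ‖(ws k).fst‖) atTop atTop
  rw [hnorm]
  exact hsnd.pos_mul_atTop one_pos (hgrow.comp (tendsto_norm_atTop_iff_cobounded.mp hxs))

end Epigraph

/-- for `g(x,y) = x² + y²` one has `∂g(∞) = ∅`. -/
theorem subInfty_sq_empty :
    subInfty (fun p : EuclideanSpace ℝ (Fin 2) => (((p 0)^2 + (p 1)^2 : ℝ) : EReal)) = ∅ := by
  have hsq (p : EuclideanSpace ℝ (Fin 2)) : (p 0)^2 + (p 1)^2 = ‖p‖ ^ 2 := by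
    simp [EuclideanSpace.norm_sq_eq, Fin.sum_univ_two]
  simp_rw [hsq]
  refine subInfty_eq_empty_of_tendsto_norm_gradient hasGradientAt_norm_sq
    (continuous_const_smul (2 : ℝ)) ?_
  simpa [norm_smul] using tendsto_norm_cobounded_atTop.const_mul_atTop two_pos
end

section
/- Let g: ℝ² → ℝ be given by g(x,y) = x² + y², and let S := {(x,y) ∈ ℝ² : g(x,y) ≤ 0} = {(0,0)}. Then S has an error bound at infinity (there exist α > 0 and R > 0 such that d((x,y);S) ≤ α·max(g(x,y),0) for all (x,y) with ‖(x,y)‖ > R), but S has no global error bound of Hoffman's type: there is no τ > 0 such that d((x,y);S) ≤ τ·max(g(x,y),0) for all (x,y) ∈ ℝ². -/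
/-! Since `S = {0}`, the distance to `S` is `‖p‖` and the residual `max (x² + y²) 0` is `‖p‖²`.
The linear quantity is dominated by the quadratic one once `‖p‖ ≥ 1`, but not near the origin. -/

open Filter Topology Set Pointwise RealInnerProductSpace

theorem not_exists_norm_le_mul_norm_sq (E : Type*) [NormedAddCommGroup E] [NormedSpace ℝ E]
    [Nontrivial E] : ¬ ∃ τ > (0:ℝ), ∀ p : E, ‖p‖ ≤ τ * ‖p‖ ^ 2 := by
  rintro ⟨τ, hτ, h⟩
  obtain ⟨p, hp⟩ := exists_norm_eq E (c := 1 / (2 * τ)) (by positivity)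
  have := h p
  rw [hp] at this
  field_simp at this
  linarith

theorem EuclideanSpace.sq_add_sq_eq_norm_sq (p : EuclideanSpace ℝ (Fin 2)) :
    p 0 ^ 2 + p 1 ^ 2 = ‖p‖ ^ 2 := by
  rw [EuclideanSpace.real_norm_sq_eq, Fin.sum_univ_two]

theorem EuclideanSpace.max_sq_add_sq_zero (p : EuclideanSpace ℝ (Fin 2)) :
    max (p 0 ^ 2 + p 1 ^ 2) 0 = ‖p‖ ^ 2 := by
  rw [EuclideanSpace.sq_add_sq_eq_norm_sq, max_eq_left (by positivity)]

theorem EuclideanSpace.setOf_sq_add_sq_nonpos :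
    {p : EuclideanSpace ℝ (Fin 2) | p 0 ^ 2 + p 1 ^ 2 ≤ 0} = {0} := by
  ext p
  simp [EuclideanSpace.sq_add_sq_eq_norm_sq]

/-- `S = {(x,y) : x² + y² ≤ 0} = {(0,0)}` has an error bound at infinity,
but no global (Hoffman-type) error bound. -/
theorem error_bound_at_infty_not_global (S : Set (EuclideanSpace ℝ (Fin 2)))
    (hS : S = {p : EuclideanSpace ℝ (Fin 2) | (p 0)^2 + (p 1)^2 ≤ 0}) :
    S = {(0 : EuclideanSpace ℝ (Fin 2))} ∧
    (∃ α > (0:ℝ), ∃ R > (0:ℝ), ∀ p : EuclideanSpace ℝ (Fin 2), R < ‖p‖ →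
      Metric.infDist p S ≤ α * max ((p 0)^2 + (p 1)^2) 0) ∧
    ¬ (∃ τ > (0:ℝ), ∀ p : EuclideanSpace ℝ (Fin 2),
      Metric.infDist p S ≤ τ * max ((p 0)^2 + (p 1)^2) 0) := by
  have hS₀ : S = {0} := hS.trans EuclideanSpace.setOf_sq_add_sq_nonpos
  have hdist (p : EuclideanSpace ℝ (Fin 2)) : Metric.infDist p S = ‖p‖ := by
    rw [hS₀, Metric.infDist_singleton, dist_zero_right]
  simp only [hdist, EuclideanSpace.max_sq_add_sq_zero]
  refine ⟨hS₀, ⟨1, one_pos, 1, one_pos, fun p hp => ?_⟩,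
    not_exists_norm_le_mul_norm_sq (EuclideanSpace ℝ (Fin 2))⟩
  rw [one_mul]
  exact le_self_pow₀ hp.le two_ne_zero
end

section
/- Let S := {(x_1, x_2) ∈ ℝ² : x_2 = x_1²} be the parabola in ℝ². Then the normal cone at infinity of S is N(∞;S) = ℝ × {0}. -/
open Filter Topology Set Pointwise RealInnerProductSpace

/-! A Fréchet normal to a set is orthogonal to the velocity of every differentiable curve inside
the set, and a vector `v` with `⟪v, y - x⟫ ≤ C * ‖y - x‖ ^ 2` on the set is a Fréchet normal.
Applied to the curve `s ↦ (s, s²)` this shows that the Fréchet normals to the parabola at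
`(t, t²)` are exactly the vectors with `v₀ + 2 t v₁ = 0`. Far out on the parabola `|t| → ∞`, so
`v₁ = -v₀ / (2t) → 0`; conversely `(a, -a / (2t))` at `(t, t²)` tends to `(a, 0)` as `t → ∞`. -/

section FrechetNormalCone

variable {E : Type*} [NormedAddCommGroup E] [InnerProductSpace ℝ E] {Ω : Set E} {x v : E}

theorem mem_frechetNormalCone_of_inner_le_sq {C : ℝ} (hx : x ∈ Ω)
    (h : ∀ y ∈ Ω, ⟪v, y - x⟫ ≤ C * ‖y - x‖ ^ 2) : v ∈ FrechetNormalCone Ω x := by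
  refine ⟨hx, fun ε hε => ?_⟩
  have hsmall : ∀ᶠ y in 𝓝 x, C * ‖y - x‖ ≤ ε := by
    have : Tendsto (fun y => C * ‖y - x‖) (𝓝 x) (𝓝 0) := by
      simpa using ((tendsto_id (x := 𝓝 x)).sub_const x).norm.const_mul C
    exact this.eventually_le_const hε
  filter_upwards [nhdsWithin_le_nhds hsmall, self_mem_nhdsWithin] with y hy hyΩ
  calc ⟪v, y - x⟫ ≤ C * ‖y - x‖ ^ 2 := h y hyΩ
    _ = (C * ‖y - x‖) * ‖y - x‖ := by ring
    _ ≤ ε * ‖y - x‖ := mul_le_mul_of_nonneg_right hy (norm_nonneg _)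

theorem FrechetNormalCone.inner_nonpos {α : Type*} {l : Filter α} [l.NeBot]
    {y : α → E} {c : α → ℝ} {w : E} (hv : v ∈ FrechetNormalCone Ω x)
    (hy : Tendsto y l (𝓝[Ω] x)) (hc : ∀ᶠ a in l, 0 ≤ c a)
    (hw : Tendsto (fun a => c a • (y a - x)) l (𝓝 w)) : ⟪v, w⟫ ≤ 0 := by
  have hε : ∀ ε > (0 : ℝ), ⟪v, w⟫ ≤ ε * ‖w‖ := by
    intro ε hε
    refine le_of_tendsto_of_tendsto (tendsto_const_nhds.inner hw) (hw.norm.const_mul ε) ?_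
    filter_upwards [hy.eventually (hv.2 ε hε), hc] with a ha hca
    rw [inner_smul_right, norm_smul, Real.norm_of_nonneg hca, mul_left_comm]
    exact mul_le_mul_of_nonneg_left ha hca
  have hlim : Tendsto (fun ε : ℝ => ε * ‖w‖) (𝓝[>] 0) (𝓝 0) := by
    have : Tendsto (fun ε : ℝ => ε * ‖w‖) (𝓝 0) (𝓝 0) := by
      simpa using (tendsto_id (x := 𝓝 (0 : ℝ))).mul_const ‖w‖
    exact this.mono_left nhdsWithin_le_nhds
  exact ge_of_tendsto hlim (eventually_nhdsWithin_of_forall hε)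

theorem FrechetNormalCone.inner_deriv_eq_zero {γ : ℝ → E} {γ' : E} {t : ℝ}
    (hv : v ∈ FrechetNormalCone Ω (γ t)) (hγ : HasDerivAt γ γ' t) (hγΩ : ∀ s, γ s ∈ Ω) :
    ⟪v, γ'⟫ = 0 := by
  have hlim : Tendsto γ (𝓝 t) (𝓝[Ω] (γ t)) :=
    tendsto_nhdsWithin_iff.2 ⟨hγ.continuousAt, Eventually.of_forall hγΩ⟩
  obtain ⟨hleft, hright⟩ := hasDerivAt_iff_tendsto_slope_left_right.1 hγ
  have hle : ⟪v, γ'⟫ ≤ 0 :=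
    FrechetNormalCone.inner_nonpos hv (hlim.mono_left nhdsWithin_le_nhds)
      (eventually_nhdsWithin_of_forall (s := Ioi t) fun s hs => inv_nonneg.2 (sub_nonneg.2 hs.le))
      hright
  have hge : ⟪v, -γ'⟫ ≤ 0 := by
    refine FrechetNormalCone.inner_nonpos hv (c := fun s => (t - s)⁻¹)
      (hlim.mono_left nhdsWithin_le_nhds)
      (eventually_nhdsWithin_of_forall (s := Iio t) fun s hs => inv_nonneg.2 (sub_nonneg.2 hs.le))
      ?_
    refine hleft.neg.congr fun s => ?_
    rw [slope_def_module, ← neg_sub t s, inv_neg, neg_smul, neg_neg]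
  rw [inner_neg_right] at hge
  linarith

end FrechetNormalCone

theorem eq_zero_of_eq_mul_of_tendsto {α : Type*} {l : Filter α} [l.NeBot] {a b c : α → ℝ}
    {A C : ℝ} (ha : Tendsto a l (𝓝 A)) (hb : Tendsto (fun k => |b k|) l atTop)
    (hc : Tendsto c l (𝓝 C)) (habc : ∀ᶠ k in l, a k = b k * c k) : C = 0 := by
  by_contra hC
  have hto : Tendsto (fun k => |c k| * |b k|) l atTop :=
    hc.abs.pos_mul_atTop (abs_pos.2 hC) hb
  refine not_tendsto_nhds_of_tendsto_atTop hto |A| (ha.abs.congr' ?_)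
  filter_upwards [habc] with k hk
  rw [hk, abs_mul, mul_comm]

theorem EuclideanSpace.real_inner_fin_two (v w : EuclideanSpace ℝ (Fin 2)) :
    ⟪v, w⟫ = v 0 * w 0 + v 1 * w 1 := by
  simp [PiLp.inner_apply, Fin.sum_univ_two, mul_comm]

theorem EuclideanSpace.norm_sq_fin_two (x : EuclideanSpace ℝ (Fin 2)) :
    ‖x‖ ^ 2 = x 0 ^ 2 + x 1 ^ 2 := by
  simp [EuclideanSpace.real_norm_sq_eq, Fin.sum_univ_two]

section Parabola

open EuclideanSpace

abbrev parabola : Set (EuclideanSpace ℝ (Fin 2)) := {p | p 1 = (p 0) ^ 2}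

variable {x v : EuclideanSpace ℝ (Fin 2)}

theorem hasDerivAt_parabola_param (s : ℝ) :
    HasDerivAt (F := EuclideanSpace ℝ (Fin 2)) (fun s => !₂[s, s ^ 2]) !₂[1, 2 * s] s := by
  have h := ((hasDerivAt_id s).smul_const (single (0 : Fin 2) (1 : ℝ))).add
    ((hasDerivAt_pow 2 s).smul_const (single (1 : Fin 2) (1 : ℝ)))
  refine (h.congr_deriv ?_).congr_of_eventuallyEq (Eventually.of_forall fun r => ?_) <;>
    ext i <;> fin_cases i <;> simp

theorem mem_frechetNormalCone_parabola_iff :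
    v ∈ FrechetNormalCone parabola x ↔ x ∈ parabola ∧ v 0 + 2 * x 0 * v 1 = 0 := by
  constructor
  · intro hv
    have hx : x = !₂[x 0, x 0 ^ 2] := by
      ext i; fin_cases i
      · rfl
      · exact hv.1
    refine ⟨hv.1, ?_⟩
    rw [hx] at hv
    have := FrechetNormalCone.inner_deriv_eq_zero hv (hasDerivAt_parabola_param (x 0))
      fun s => by simp
    simp only [real_inner_fin_two, Fin.isValue, Matrix.cons_val_zero, mul_one,
      Matrix.cons_val_one, Matrix.cons_val_fin_one] at this
    linarith
  · rintro ⟨hx, hv⟩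
    refine mem_frechetNormalCone_of_inner_le_sq (C := |v 1|) hx fun y hy => ?_
    have hy : y 1 = y 0 ^ 2 := hy
    have hx : x 1 = x 0 ^ 2 := hx
    have hinner : ⟪v, y - x⟫ = v 1 * (y 0 - x 0) ^ 2 := by
      rw [real_inner_fin_two]
      simp only [PiLp.sub_apply, hx, hy]
      linear_combination (y 0 - x 0) * hv
    rw [hinner, norm_sq_fin_two]
    simp only [PiLp.sub_apply]
    nlinarith [le_abs_self (v 1), sq_nonneg (y 0 - x 0), sq_nonneg (y 1 - x 1), abs_nonneg (v 1)]

theorem norm_le_of_mem_parabola (hx : x ∈ parabola) : ‖x‖ ≤ |x 0| + |x 0| ^ 2 := by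
  have hx : x 1 = x 0 ^ 2 := hx
  refine le_of_sq_le_sq ?_ (by positivity)
  rw [norm_sq_fin_two, hx]
  nlinarith [abs_nonneg (x 0), sq_abs (x 0)]

theorem tendsto_abs_apply_zero_of_mem_parabola {α : Type*} {l : Filter α}
    {xs : α → EuclideanSpace ℝ (Fin 2)} (hxs : ∀ k, xs k ∈ parabola)
    (h : Tendsto (fun k => ‖xs k‖) l atTop) : Tendsto (fun k => |xs k 0|) l atTop := by
  refine tendsto_atTop.2 fun b => ?_
  filter_upwards [h.eventually_ge_atTop (|b| + |b| ^ 2)] with k hk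
  have := norm_le_of_mem_parabola (hxs k)
  nlinarith [abs_nonneg (xs k 0), abs_nonneg b, le_abs_self b]

theorem apply_one_eq_zero_of_mem_normalConeAtInfty_parabola
    (hv : v ∈ NormalConeAtInfty parabola) : v 1 = 0 := by
  obtain ⟨xs, vs, hvs, hxs, hlim⟩ := hv
  have hnormal k := mem_frechetNormalCone_parabola_iff.1 (hvs k)
  refine eq_zero_of_eq_mul_of_tendsto (a := fun k => vs k 0) (b := fun k => -(2 * xs k 0))
    (c := fun k => vs k 1) (((PiLp.continuous_apply 2 _ 0).tendsto v).comp hlim) ?_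
    (((PiLp.continuous_apply 2 _ 1).tendsto v).comp hlim)
    (Eventually.of_forall fun k => by linear_combination (hnormal k).2)
  simpa [abs_mul] using
    (tendsto_abs_apply_zero_of_mem_parabola (fun k => (hnormal k).1) hxs).const_mul_atTop two_pos

theorem mem_normalConeAtInfty_parabola_of_apply_one_eq_zero (hv : v 1 = 0) :
    v ∈ NormalConeAtInfty parabola := by
  refine ⟨fun k => !₂[k + 1, (k + 1) ^ 2], fun k => !₂[v 0, -v 0 / (2 * (k + 1))],
    fun k => mem_frechetNormalCone_parabola_iff.2 ⟨by simp, ?_⟩, ?_, ?_⟩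
  · simp only [Matrix.cons_val_zero, Matrix.cons_val_one]
    field_simp
    ring
  · refine tendsto_atTop_mono (f := fun k : ℕ => (k : ℝ) + 1) (fun k => ?_)
      (tendsto_natCast_atTop_atTop.atTop_add tendsto_const_nhds)
    simpa using (le_abs_self _).trans
      (PiLp.norm_apply_le (!₂[(k : ℝ) + 1, ((k : ℝ) + 1) ^ 2] : EuclideanSpace ℝ (Fin 2)) 0)
  · have hdiv : Tendsto (fun k : ℕ => -v 0 / (2 * (k + 1))) atTop (𝓝 0) :=
      tendsto_const_nhds.div_atTop
        ((tendsto_natCast_atTop_atTop.atTop_add tendsto_const_nhds).const_mul_atTop two_pos)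
    have hv : v = !₂[v 0, 0] := by
      ext i; fin_cases i
      · rfl
      · exact hv
    rw [hv]
    exact ((by fun_prop : Continuous fun b : ℝ => !₂[v 0, b]).tendsto 0).comp hdiv

end Parabola

/-- for the parabola `S = {(x₁,x₂) : x₂ = x₁²}` one has `N(∞;S) = ℝ × {0}`. -/
theorem normalConeAtInfty_parabola :
    NormalConeAtInfty {p : EuclideanSpace ℝ (Fin 2) | p 1 = (p 0)^2}
      = {v : EuclideanSpace ℝ (Fin 2) | v 1 = 0} :=
  Set.ext fun _ => ⟨apply_one_eq_zero_of_mem_normalConeAtInfty_parabola,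
    mem_normalConeAtInfty_parabola_of_apply_one_eq_zero⟩
end
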